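/- arXiv:1110.4080 — 2 statements merged into one kernel-verified Lean document; each statement's English description precedes it below -/
import Mathlib

section
/- Let I ⊆ R = K[x_0,...,x_n] be a saturated strongly stable ideal and x^A a contractible monomial in I (i.e., x^A ∉ I, x^A·x_{n−1} is a minimal generator of I, and every left-shift of x^A lies in I). Then the contraction I^con, generated by (G(I) ∪ {x^A}) \ {x^A x_r, x^A x_{r+1},..., x^A x_{n−1}} with r = max(x^A), is a saturated strongly stable ideal. -/
open MvPolynomial

noncomputable section

/-- The polynomial ring `K[x_0,…,x_n]` in `n+1` variables. -/
abbrev PR (K : Type*) [Field K] (n : ℕ) := MvPolynomial (Fin (n+1)) K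

variable {K : Type*} [Field K] {n : ℕ}

/-- The monomial `x^A`. -/
def mon (A : Fin (n+1) →₀ ℕ) : PR K n := monomial A 1

/-- Total degree of the monomial with exponent vector `A`. -/
def mdeg (A : Fin (n+1) →₀ ℕ) : ℕ := ∑ i, A i

/-- The largest index of a variable dividing `x^A` (0 if `A = 0`). -/
def maxIdx (A : Fin (n+1) →₀ ℕ) : Fin (n+1) := WithBot.unbotD 0 (A.support.max)

/-- The exponent vector of `(x_i / x_j) · x^A`. -/
def shiftM (A : Fin (n+1) →₀ ℕ) (i j : Fin (n+1)) : Fin (n+1) →₀ ℕ :=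
  A + Finsupp.single i 1 - Finsupp.single j 1

/-- `I` is a monomial ideal: generated by a set of monomials. -/
def IsMonomialIdeal (I : Ideal (PR K n)) : Prop :=
  ∃ S : Set (Fin (n+1) →₀ ℕ), I = Ideal.span ((fun A => (mon A : PR K n)) '' S)

/-- Strongly stable monomial ideal. -/
def StronglyStable (I : Ideal (PR K n)) : Prop :=
  ∀ A : Fin (n+1) →₀ ℕ, mon A ∈ I → ∀ i j : Fin (n+1), A j ≠ 0 → i < j →
    mon (shiftM A i j) ∈ I

/-- Stable monomial ideal. -/
def Stable (I : Ideal (PR K n)) : Prop :=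
  ∀ A : Fin (n+1) →₀ ℕ, A ≠ 0 → mon A ∈ I → ∀ i : Fin (n+1), i < maxIdx A →
    mon (shiftM A i (maxIdx A)) ∈ I

/-- `x^A` is a minimal monomial generator of `I`. -/
def MinGen (I : Ideal (PR K n)) (A : Fin (n+1) →₀ ℕ) : Prop :=
  mon A ∈ I ∧ ∀ B : Fin (n+1) →₀ ℕ, B ≤ A → B ≠ A → mon B ∉ I

/-- The set of exponent vectors of minimal monomial generators of `I`. -/
def Gens (I : Ideal (PR K n)) : Set (Fin (n+1) →₀ ℕ) := {A | MinGen I A}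

/-- The irrelevant maximal ideal `(x_0,…,x_n)`. -/
def irrIdeal (K : Type*) [Field K] (n : ℕ) : Ideal (PR K n) :=
  Ideal.span (Set.range fun i : Fin (n+1) => (X i : PR K n))

/-- `I` is saturated: `(I : (x_0,…,x_n)) = I`. -/
def Saturated (I : Ideal (PR K n)) : Prop :=
  Submodule.colon I (irrIdeal K n) = I

/-- The saturation `∪ₖ (I : (x_0,…,x_n)^k)`. -/
def saturationOf (I : Ideal (PR K n)) : Ideal (PR K n) :=
  ⨆ k : ℕ, Submodule.colon I (((irrIdeal K n) ^ k : Ideal (PR K n)) : Set (PR K n))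

/-- The Hilbert function of `R/I`: `j ↦ dim_K [R/I]_j`. -/
def hilbF {σ : Type*} (I : Ideal (MvPolynomial σ K)) (j : ℕ) : ℕ :=
  Module.finrank K
    ((homogeneousSubmodule σ K j).map (Ideal.Quotient.mkₐ K I).toLinearMap)

/-- `p` is the Hilbert polynomial of `R/I`. -/
def IsHilbPoly {σ : Type*} (I : Ideal (MvPolynomial σ K)) (p : Polynomial ℚ) : Prop :=
  ∃ N : ℕ, ∀ j : ℕ, N ≤ j → p.eval (j : ℚ) = (hilbF I j : ℚ)

/-- The binomial-coefficient polynomial `C(q, k) = q(q-1)⋯(q-k+1)/k!`. -/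
def choosePoly (q : Polynomial ℚ) (k : ℕ) : Polynomial ℚ :=
  ((k.factorial : ℚ))⁻¹ • ∏ j ∈ Finset.range k, (q - Polynomial.C (j : ℚ))

/-- The canonical representation `p(z) = Σ_{i=0}^d [C(z+i,i+1) − C(z+i−b_i,i+1)]`. -/
def canonicalHP (d : ℕ) (b : ℕ → ℕ) : Polynomial ℚ :=
  ∑ i ∈ Finset.range (d+1),
    (choosePoly (Polynomial.X + Polynomial.C (i : ℚ)) (i+1)
      - choosePoly (Polynomial.X + Polynomial.C (i : ℚ) - Polynomial.C (b i : ℚ)) (i+1))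

/-- `x^A >_lex x^B`. -/
def LexGt (A B : Fin (n+1) →₀ ℕ) : Prop :=
  ∃ i : Fin (n+1), (∀ j : Fin (n+1), j < i → A j = B j) ∧ B i < A i

/-- `I` is a lexsegment ideal. -/
def IsLexsegment (I : Ideal (PR K n)) : Prop :=
  IsMonomialIdeal I ∧ ∀ A B : Fin (n+1) →₀ ℕ, mdeg A = mdeg B → mon B ∈ I →
    LexGt A B → mon A ∈ I

/-- `I` is a homogeneous ideal. -/
def Homog (I : Ideal (PR K n)) : Prop :=
  ∀ f ∈ I, ∀ j : ℕ, homogeneousComponent j f ∈ I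

open Fin.NatCast in
/-- The set of right-shifts of `x^A`. -/
def rightShifts (A : Fin (n+1) →₀ ℕ) : Set (Fin (n+1) →₀ ℕ) :=
  {B | ∃ i : Fin (n+1), (i : ℕ) + 2 ≤ n ∧ A i ≠ 0 ∧
    B = shiftM A ((((i : ℕ) + 1 : ℕ)) : Fin (n+1)) i}

open Fin.NatCast in
/-- The set of left-shifts of `x^A`. -/
def leftShifts (A : Fin (n+1) →₀ ℕ) : Set (Fin (n+1) →₀ ℕ) :=
  {B | ∃ i : Fin (n+1), 1 ≤ (i : ℕ) ∧ (i : ℕ) + 1 ≤ n ∧ A i ≠ 0 ∧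
    B = shiftM A ((((i : ℕ) - 1 : ℕ)) : Fin (n+1)) i}

/-- The monomials `x^A x_r, …, x^A x_{n-1}` with `r = max(x^A)`. -/
def expSet (A : Fin (n+1) →₀ ℕ) : Set (Fin (n+1) →₀ ℕ) :=
  {B | ∃ j : Fin (n+1), ((maxIdx A : ℕ)) ≤ (j : ℕ) ∧ (j : ℕ) + 1 ≤ n ∧
    B = A + Finsupp.single j 1}

/-- `x^A ≠ 1` is expandable in `I`. -/
def Expandable (I : Ideal (PR K n)) (A : Fin (n+1) →₀ ℕ) : Prop :=
  A ≠ 0 ∧ MinGen I A ∧ ∀ B ∈ rightShifts A, ¬ MinGen I B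

open Fin.NatCast in
/-- `x^A ≠ 1` is contractible in `I`. -/
def Contractible (I : Ideal (PR K n)) (A : Fin (n+1) →₀ ℕ) : Prop :=
  A ≠ 0 ∧ mon A ∉ I ∧ MinGen I (A + Finsupp.single (((n - 1 : ℕ)) : Fin (n+1)) 1) ∧
    ∀ B ∈ leftShifts A, mon B ∈ I

/-- The expansion of `x^A` in `I`. -/
def expansionIdeal (I : Ideal (PR K n)) (A : Fin (n+1) →₀ ℕ) : Ideal (PR K n) :=
  Ideal.span ((fun B => (mon B : PR K n)) '' ((Gens I \ {A}) ∪ expSet A))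

/-- The contraction of `x^A` in `I`. -/
def contractionIdeal (I : Ideal (PR K n)) (A : Fin (n+1) →₀ ℕ) : Ideal (PR K n) :=
  Ideal.span ((fun B => (mon B : PR K n)) '' ((Gens I ∪ {A}) \ expSet A))

open Fin.NatCast in
/-- Setting `x_{n-1} = x_n = 1` in the exponent vector `A`. -/
def stripLastTwo (A : Fin (n+1) →₀ ℕ) : Fin (n+1) →₀ ℕ :=
  Finsupp.update (Finsupp.update A (((n : ℕ)) : Fin (n+1)) 0) (((n - 1 : ℕ)) : Fin (n+1)) 0

/-- The double saturation `sat_{x_{n-1},x_n}(I)` (as an ideal of `R`). -/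
def doubleSat (I : Ideal (PR K n)) : Ideal (PR K n) :=
  Ideal.span ((fun A => (mon (stripLastTwo A) : PR K n)) '' Gens I)

/-- Restriction of an exponent vector to the first `n` variables. -/
def restrictExp (A : Fin (n+1) →₀ ℕ) : Fin n →₀ ℕ :=
  Finsupp.comapDomain Fin.castSucc A (Fin.castSucc_injective n).injOn

/-- The ideal `I · R^{(1)}` in `K[x_0,…,x_{n-1}]` (for saturated monomial `I`). -/
def restrictIdeal (I : Ideal (PR K n)) : Ideal (MvPolynomial (Fin n) K) :=
  Ideal.span ((fun A => (monomial (restrictExp A) (1 : K) : MvPolynomial (Fin n) K)) '' Gens I)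

/-- Lex order on exponent vectors in `n` variables. -/
def LexGt' (A B : Fin n →₀ ℕ) : Prop :=
  ∃ i : Fin n, (∀ j : Fin n, j < i → A j = B j) ∧ B i < A i

/-- Monomial ideal in `K[x_0,…,x_{n-1}]`. -/
def IsMonomialIdeal' (I : Ideal (MvPolynomial (Fin n) K)) : Prop :=
  ∃ S : Set (Fin n →₀ ℕ),
    I = Ideal.span ((fun A => (monomial A (1 : K) : MvPolynomial (Fin n) K)) '' S)

/-- Lexsegment ideal in `K[x_0,…,x_{n-1}]`. -/
def IsLexsegment' (I : Ideal (MvPolynomial (Fin n) K)) : Prop :=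
  IsMonomialIdeal' I ∧ ∀ A B : Fin n →₀ ℕ, (∑ i, A i) = (∑ i, B i) →
    monomial B (1 : K) ∈ I → LexGt' A B → monomial A (1 : K) ∈ I

/-- `I` is almost lexsegment: saturated strongly stable with `I·R^{(1)}` lexsegment. -/
def AlmostLex (I : Ideal (PR K n)) : Prop :=
  IsMonomialIdeal I ∧ StronglyStable I ∧ Saturated I ∧ IsLexsegment' (restrictIdeal I)

/-- A graded free resolution of the ideal `I`, with `rank i` the rank of the `i`-th
free module and `twist i k` the degrees of the standard basis elements. -/
structure GradedFreeRes (I : Ideal (PR K n)) where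
  rank : ℕ → ℕ
  twist : (i : ℕ) → Fin (rank i) → ℕ
  diff : (i : ℕ) → ((Fin (rank (i+1)) → PR K n) →ₗ[PR K n] (Fin (rank i) → PR K n))
  aug : (Fin (rank 0) → PR K n) →ₗ[PR K n] PR K n
  aug_range : LinearMap.range aug = I
  aug_graded : ∀ k, aug (Pi.single k 1) ∈ homogeneousSubmodule (Fin (n+1)) K (twist 0 k)
  diff_graded : ∀ i k l, diff i (Pi.single k 1) l = 0 ∨
    (twist i l ≤ twist (i+1) k ∧
      diff i (Pi.single k 1) l ∈ homogeneousSubmodule (Fin (n+1)) K (twist (i+1) k - twist i l))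
  exact_aug : LinearMap.range (diff 0) = LinearMap.ker aug
  exact_diff : ∀ i, LinearMap.range (diff (i+1)) = LinearMap.ker (diff i)

/-- A resolution is minimal if all differential entries lie in the irrelevant ideal. -/
def MinimalRes {I : Ideal (PR K n)} (F : GradedFreeRes I) : Prop :=
  ∀ i k l, constantCoeff (F.diff i (Pi.single k 1) l) = 0

/-!
In a saturated strongly stable ideal no minimal generator involves `x_n`, and neither does `x^A`
(it divides the minimal generator `x^A x_{n-1}`); an ideal generated by monomials free of `x_n`
is saturated. A monomial ideal is strongly stable as soon as the shifts of its generators lie in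
it: for an old generator the shifted monomial lies in `I`, and `I` is contained in the
contraction because the discarded generators are multiples of `x^A`; for `x^A` itself the shift `x_i / x_j` is the left-shift `x_{j-1} / x_j` followed by a shift of
a monomial of `I`.
-/

lemma mon_add (B C : Fin (n+1) →₀ ℕ) : (mon (B + C) : PR K n) = mon B * mon C := by
  simp [mon, monomial_mul]

lemma mon_mul_X (B : Fin (n+1) →₀ ℕ) (i : Fin (n+1)) :
    (mon B : PR K n) * X i = mon (B + Finsupp.single i 1) := by
  simp [mon, X, monomial_mul]

lemma mon_mem_of_le {I : Ideal (PR K n)} {B C : Fin (n+1) →₀ ℕ} (hC : (mon C : PR K n) ∈ I)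
    (h : C ≤ B) : (mon B : PR K n) ∈ I := by
  rw [← add_tsub_cancel_of_le h, mon_add]
  exact I.mul_mem_right _ hC

lemma mon_mem_span_mon_iff {S : Set (Fin (n+1) →₀ ℕ)} {B : Fin (n+1) →₀ ℕ} :
    (mon B : PR K n) ∈ Ideal.span ((fun A => (mon A : PR K n)) '' S) ↔ ∃ C ∈ S, C ≤ B := by
  simp [mon, mem_ideal_span_monomial_image]

lemma mem_colon_irrIdeal_iff {I : Ideal (PR K n)} {f : PR K n} :
    f ∈ I.colon (irrIdeal K n) ↔ ∀ i, f * X i ∈ I := by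
  simp [irrIdeal, Ideal.span, Submodule.colon_span, Submodule.mem_colon]

lemma exists_minGen_le {I : Ideal (PR K n)} {E : Fin (n+1) →₀ ℕ} (hE : (mon E : PR K n) ∈ I) :
    ∃ D ∈ Gens I, D ≤ E := by
  obtain ⟨D, hDE, hD, hmin⟩ :=
    exists_minimal_le_of_wellFoundedLT (fun B => (mon B : PR K n) ∈ I) E hE
  exact ⟨D, ⟨hD, fun B hBD hne hB => hne (le_antisymm hBD (hmin hB hBD))⟩, hDE⟩

lemma shiftM_apply (A : Fin (n+1) →₀ ℕ) (i j k : Fin (n+1)) :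
    shiftM A i j k = A k + (if i = k then 1 else 0) - (if j = k then 1 else 0) := by
  simp [shiftM, Finsupp.single_apply]

lemma shiftM_mono {A B : Fin (n+1) →₀ ℕ} (h : A ≤ B) (i j : Fin (n+1)) :
    shiftM A i j ≤ shiftM B i j := by
  intro k
  have := h k
  simp only [shiftM_apply]
  omega

lemma le_shiftM {B C : Fin (n+1) →₀ ℕ} (h : C ≤ B) {i j : Fin (n+1)} (hij : i ≠ j)
    (hj : C j < B j) : C ≤ shiftM B i j := by
  intro k
  have := h k
  rw [shiftM_apply]
  rcases eq_or_ne j k with rfl | hk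
  · rw [if_pos rfl, if_neg hij]; omega
  · rw [if_neg hk]; split_ifs <;> omega

lemma shiftM_shiftM {A : Fin (n+1) →₀ ℕ} {i j k : Fin (n+1)} (hAj : A j ≠ 0) (hkj : k ≠ j)
    (hik : i ≠ k) : shiftM (shiftM A k j) i k = shiftM A i j := by
  ext m
  simp only [shiftM_apply]
  split_ifs <;> subst_vars <;> simp_all; omega

/-- Removing one factor `x_n` from a minimal generator gives a monomial which strong stability
puts into `I : (x_0,…,x_n)`, hence into `I` by saturation: contradiction with minimality. -/
lemma MinGen.apply_last_eq_zero {I : Ideal (PR K n)} (hss : StronglyStable I)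
    (hsat : Saturated I) {C : Fin (n+1) →₀ ℕ} (hC : MinGen I C) : C (Fin.last n) = 0 := by
  by_contra h
  have hle : Finsupp.single (Fin.last n) 1 ≤ C :=
    Finsupp.single_le_iff.mpr (Nat.one_le_iff_ne_zero.mpr h)
  set C' := C - Finsupp.single (Fin.last n) 1
  have hcolon : (mon C' : PR K n) ∈ I.colon (irrIdeal K n) := by
    refine mem_colon_irrIdeal_iff.mpr fun i => ?_
    rw [mon_mul_X]
    rcases eq_or_ne i (Fin.last n) with rfl | hi
    · rw [tsub_add_cancel_of_le hle]
      exact hC.1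
    · rw [tsub_add_eq_add_tsub hle]
      exact hss C hC.1 i _ h (Fin.lt_last_iff_ne_last.mpr hi)
  rw [hsat] at hcolon
  refine hC.2 C' tsub_le_self (fun heq => ?_) hcolon
  have := congrArg (· (Fin.last n)) heq
  simp only [C', Finsupp.tsub_apply, Finsupp.single_eq_same] at this
  omega

lemma Contractible.apply_last_eq_zero {I : Ideal (PR K n)} (hss : StronglyStable I)
    (hsat : Saturated I) {A : Fin (n+1) →₀ ℕ} (hA : Contractible I A) : A (Fin.last n) = 0 := by
  have := hA.2.2.1.apply_last_eq_zero hss hsat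
  rw [Finsupp.add_apply] at this
  omega

open Fin.NatCast in
/-- The shift `x_i / x_j` factors as the left-shift `x_{j-1} / x_j` followed by `x_i / x_{j-1}`. -/
lemma StronglyStable.mon_shiftM_mem_of_leftShifts {I : Ideal (PR K n)} (hss : StronglyStable I)
    {A : Fin (n+1) →₀ ℕ} (hL : ∀ B ∈ leftShifts A, (mon B : PR K n) ∈ I) {i j : Fin (n+1)}
    (hAj : A j ≠ 0) (hj : j ≠ Fin.last n) (hij : i < j) : (mon (shiftM A i j) : PR K n) ∈ I := by
  have hjn : (j : ℕ) + 1 ≤ n := by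
    have := Fin.val_lt_last hj
    omega
  have hij_val : (i : ℕ) < j := hij
  set j' : Fin (n+1) := (((j : ℕ) - 1 : ℕ) : Fin (n+1))
  have hj' : (j' : ℕ) = j - 1 := by
    simp only [j', Fin.val_natCast]
    exact Nat.mod_eq_of_lt (by omega)
  have hj'j : j' ≠ j := fun h => by have := congrArg Fin.val h; omega
  have hleft : (mon (shiftM A j' j) : PR K n) ∈ I := hL _ ⟨j, by omega, hjn, hAj, rfl⟩
  rcases eq_or_ne i j' with rfl | hij'
  · exact hleft
  · have hlt : i < j' := by
      have : (i : ℕ) ≠ j' := fun h => hij' (Fin.ext h)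
      rw [Fin.lt_def]
      omega
    have hpos : shiftM A j' j j' ≠ 0 := by
      rw [shiftM_apply, if_pos rfl, if_neg hj'j.symm]
      omega
    rw [← shiftM_shiftM hAj hj'j hij']
    exact hss _ hleft i j' hpos hlt

lemma stronglyStable_span_mon {S : Set (Fin (n+1) →₀ ℕ)}
    (hS : ∀ C ∈ S, ∀ i j, C j ≠ 0 → i < j →
      (mon (shiftM C i j) : PR K n) ∈ Ideal.span ((fun A => (mon A : PR K n)) '' S)) :
    StronglyStable (Ideal.span ((fun A => (mon A : PR K n)) '' S)) := by
  intro B hB i j hBj hij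
  obtain ⟨C, hC, hCB⟩ := mon_mem_span_mon_iff.mp hB
  rcases (hCB j).lt_or_eq with hlt | heq
  · exact mon_mem_span_mon_iff.mpr ⟨C, hC, le_shiftM hCB hij.ne hlt⟩
  · exact mon_mem_of_le (hS C hC i j (heq ▸ hBj) hij) (shiftM_mono hCB i j)

lemma saturated_span_mon {S : Set (Fin (n+1) →₀ ℕ)} (hS : ∀ C ∈ S, C (Fin.last n) = 0) :
    Saturated (Ideal.span ((fun A => (mon A : PR K n)) '' S)) := by
  refine le_antisymm (fun f hf => ?_)
    fun f hf => mem_colon_irrIdeal_iff.mpr fun i => Ideal.mul_mem_right _ _ hf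
  have hfX := mem_colon_irrIdeal_iff.mp hf (Fin.last n)
  simp only [mon] at hfX ⊢
  rw [mem_ideal_span_monomial_image] at hfX ⊢
  intro m hm
  obtain ⟨C, hC, hCm⟩ := hfX _ ((support_mul_X _ f).symm ▸ Finset.mem_map_of_mem _ hm)
  refine ⟨C, hC, fun k => ?_⟩
  have := hCm k
  rcases eq_or_ne k (Fin.last n) with rfl | hk
  · simp [hS C hC]
  · simpa [Finsupp.single_apply, hk.symm] using this

lemma mon_mem_contractionIdeal {I : Ideal (PR K n)} {A B : Fin (n+1) →₀ ℕ}
    (hB : (mon B : PR K n) ∈ I) : (mon B : PR K n) ∈ contractionIdeal I A := by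
  obtain ⟨D, hD, hDB⟩ := exists_minGen_le hB
  rw [contractionIdeal, mon_mem_span_mon_iff]
  by_cases hDA : D ∈ expSet A
  · obtain ⟨k, -, -, rfl⟩ := hDA
    refine ⟨A, ⟨Or.inr rfl, ?_⟩, le_self_add.trans hDB⟩
    rintro ⟨j, -, -, hj⟩
    simpa using congrArg (· j) hj
  · exact ⟨D, ⟨Or.inl hD, hDA⟩, hDB⟩

end

theorem contraction_saturated_stronglyStable_general
    {K : Type*} [Field K] {n : ℕ} (I : Ideal (PR K n))
    (hss : StronglyStable I) (hsat : Saturated I)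
    (A : Fin (n+1) →₀ ℕ) (hA : Contractible I A) :
    IsMonomialIdeal (contractionIdeal I A) ∧ StronglyStable (contractionIdeal I A) ∧
      Saturated (contractionIdeal I A) := by
  have hAn := hA.apply_last_eq_zero hss hsat
  refine ⟨⟨_, rfl⟩, stronglyStable_span_mon ?_, saturated_span_mon ?_⟩
  · rintro C ⟨hC | rfl, -⟩ i j hCj hij
    · exact mon_mem_contractionIdeal (hss C hC.1 i j hCj hij)
    · exact mon_mem_contractionIdeal <| hss.mon_shiftM_mem_of_leftShifts hA.2.2.2 hCj
        (fun h => hCj (h ▸ hAn)) hij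
  · rintro C ⟨hC | rfl, -⟩
    exacts [hC.apply_last_eq_zero hss hsat, hAn]

/-- the contraction of a contractible monomial in a saturated strongly
stable ideal is again a saturated strongly stable ideal. -/
theorem contraction_saturated_stronglyStable
    {K : Type*} [Field K] {n : ℕ} (hn : 2 ≤ n) (I : Ideal (PR K n))
    (hmono : IsMonomialIdeal I) (hss : StronglyStable I) (hsat : Saturated I)
    (A : Fin (n+1) →₀ ℕ) (hA : Contractible I A) :
    IsMonomialIdeal (contractionIdeal I A) ∧ StronglyStable (contractionIdeal I A) ∧
      Saturated (contractionIdeal I A) :=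
  contraction_saturated_stronglyStable_general I hss hsat A hA
end

section
/- In any saturated strongly stable ideal I ⊊ R and any fixed degree d in which I has minimal generators, the lexicographically smallest minimal monomial generator of I of degree d is expandable in I. -/
/-
Proof idea: a right-shift `x^A · x_{i+1} / x_i` has the same degree as `x^A` and is
lexicographically smaller, since the first exponent where they differ is the one of `x_i`,
which drops by one. So if it were a minimal generator, `x^A` would not be the lex-smallest
one of degree `d`.
-/

open MvPolynomial

section

variable {n : ℕ}

theorem lexGt_iff_toLex_lt {A B : Fin (n+1) →₀ ℕ} : LexGt A B ↔ toLex (⇑B) < toLex (⇑A) :=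
  ⟨fun ⟨i, hagree, hi⟩ => ⟨i, fun j hj => (hagree j hj).symm, hi⟩,
    fun ⟨i, hagree, hi⟩ => ⟨i, fun j hj => (hagree j hj).symm, hi⟩⟩

theorem LexGt.ne {A B : Fin (n+1) →₀ ℕ} (h : LexGt A B) : B ≠ A := by
  rintro rfl
  exact lt_irrefl _ (lexGt_iff_toLex_lt.mp h)

theorem LexGt.not_lexGt {A B : Fin (n+1) →₀ ℕ} (h : LexGt A B) : ¬ LexGt B A :=
  fun h' => lt_asymm (lexGt_iff_toLex_lt.mp h) (lexGt_iff_toLex_lt.mp h')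

theorem mdeg_add (A B : Fin (n+1) →₀ ℕ) : mdeg (A + B) = mdeg A + mdeg B := by
  simp [mdeg, Finset.sum_add_distrib]

theorem mdeg_single_one (i : Fin (n+1)) : mdeg (Finsupp.single i 1) = 1 := by
  simp [mdeg, Finsupp.single_apply]

theorem shiftM_add_single {A : Fin (n+1) →₀ ℕ} {i : Fin (n+1)} (hAi : A i ≠ 0) (j : Fin (n+1)) :
    shiftM A j i + Finsupp.single i 1 = A + Finsupp.single j 1 := by
  refine tsub_add_cancel_of_le fun k => ?_
  rcases eq_or_ne i k with rfl | hik
  · simp only [Finsupp.single_eq_same, Finsupp.add_apply]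
    omega
  · simp [Finsupp.single_eq_of_ne' hik]

theorem mdeg_shiftM {A : Fin (n+1) →₀ ℕ} {i : Fin (n+1)} (hAi : A i ≠ 0) (j : Fin (n+1)) :
    mdeg (shiftM A j i) = mdeg A := by
  have h := congrArg mdeg (shiftM_add_single hAi j)
  rw [mdeg_add, mdeg_add, mdeg_single_one, mdeg_single_one] at h
  omega

theorem lexGt_shiftM {A : Fin (n+1) →₀ ℕ} {i j : Fin (n+1)} (hij : i < j) (hAi : A i ≠ 0) :
    LexGt A (shiftM A j i) := by
  have hshift_apply : ∀ k, k < j → shiftM A j i k = A k - Finsupp.single i 1 k := fun k hk => by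
    simp [shiftM, Finsupp.single_eq_of_ne hk.ne]
  refine ⟨i, fun k hk => ?_, ?_⟩
  · rw [hshift_apply k (hk.trans hij), Finsupp.single_eq_of_ne hk.ne, Nat.sub_zero]
  · rw [hshift_apply i hij, Finsupp.single_eq_same]
    omega

theorem ne_zero_of_mon_mem {K : Type*} [Field K] {I : Ideal (PR K n)} (hne : I ≠ ⊤)
    {A : Fin (n+1) →₀ ℕ} (hA : mon A ∈ I) : A ≠ 0 := by
  rintro rfl
  exact hne ((Ideal.eq_top_iff_one I).mpr (by simpa [mon] using hA))

end

theorem lex_smallest_minGen_expandable_general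
    {K : Type*} [Field K] {n : ℕ} (I : Ideal (PR K n)) (hne : I ≠ ⊤)
    (d : ℕ) (A : Fin (n+1) →₀ ℕ) (hA : MinGen I A) (hdeg : mdeg A = d)
    (hmin : ∀ B : Fin (n+1) →₀ ℕ, MinGen I B → mdeg B = d → B ≠ A → LexGt B A) :
    Expandable I A := by
  refine ⟨ne_zero_of_mon_mem hne hA.1, hA, ?_⟩
  rintro _ ⟨i, hi, hAi, rfl⟩ hB
  open Fin.NatCast in
  have hlt : i < (((i : ℕ) + 1 : ℕ) : Fin (n+1)) := by
    rw [Fin.lt_def, Fin.val_natCast, Nat.mod_eq_of_lt (by omega)]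
    omega
  have hshift := lexGt_shiftM hlt hAi
  exact hshift.not_lexGt (hmin _ hB ((mdeg_shiftM hAi _).trans hdeg) hshift.ne)

/-- in any degree `d`, the lexicographically smallest minimal monomial
generator of degree `d` of a saturated strongly stable ideal `I ⊊ R` is expandable. -/
theorem lex_smallest_minGen_expandable
    {K : Type*} [Field K] {n : ℕ} (I : Ideal (PR K n)) (hne : I ≠ ⊤)
    (hmono : IsMonomialIdeal I) (hss : StronglyStable I) (hsat : Saturated I)
    (d : ℕ) (A : Fin (n+1) →₀ ℕ) (hA : MinGen I A) (hdeg : mdeg A = d)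
    (hmin : ∀ B : Fin (n+1) →₀ ℕ, MinGen I B → mdeg B = d → B ≠ A → LexGt B A) :
    Expandable I A :=
  lex_smallest_minGen_expandable_general I hne d A hA hdeg hmin
end
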